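/- Let h : ℝ² → [0,∞) be continuous. Let B be either a top border B(t) := (t, b) with direction d_B = (1,0), or a right border B(t) := (b, t) with direction d_B = (0,1), for a fixed b ≥ 0. Let A(s) := a + s·e with a ∈ [0,∞)² and e ∈ {(1,0),(0,1)}. For parameters σ, τ with (0,0) ≤ A(σ) ≤ B(τ) componentwise, write [σ ▷ τ] := opt_h((0,0), A(σ)) + opt_h(A(σ), B(τ)). Suppose t < t′ and s, s′ are such that A(s) and A(s′) both lie componentwise between (0,0) and B(t) (hence also between (0,0) and B(t′)), and suppose [s ▷ t] < [s′ ▷ t] while [s ▷ t′] ≥ [s′ ▷ t′]. Then s < s′ if and only if e = d_B. -/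
import Mathlib


/-- An `(x,y)`-path: a function `f : [x₁+x₂, y₁+y₂] → ℝ` with `f(x₁+x₂) = x₁`,
`f(y₁+y₂) = y₁` such that both `f` and `s ↦ s − f s` are monotone non-decreasing. -/
def IsPath (x y : ℝ × ℝ) (f : ℝ → ℝ) : Prop :=
  x.1 ≤ y.1 ∧ x.2 ≤ y.2 ∧
  f (x.1 + x.2) = x.1 ∧ f (y.1 + y.2) = y.1 ∧
  MonotoneOn f (Set.Icc (x.1 + x.2) (y.1 + y.2)) ∧
  MonotoneOn (fun s => s - f s) (Set.Icc (x.1 + x.2) (y.1 + y.2))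

/-- The cost of an `(x,y)`-path `f` with respect to `h`. -/
noncomputable def pathCost (h : ℝ × ℝ → ℝ) (x y : ℝ × ℝ) (f : ℝ → ℝ) : ℝ :=
  ∫ s in (x.1 + x.2)..(y.1 + y.2), h (f s, s - f s)

/-- `opt_h(x,y)`: the infimum of the costs of all `(x,y)`-paths. -/
noncomputable def optCost (h : ℝ × ℝ → ℝ) (x y : ℝ × ℝ) : ℝ :=
  sInf (pathCost h x y '' {f : ℝ → ℝ | IsPath x y f})

private lemma monotone_continuous {F : ℝ → ℝ} (h1 : Monotone F)
    (h2 : Monotone fun s => s - F s) : Continuous F := by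
  have : LipschitzWith 1 F := by
    apply LipschitzWith.of_dist_le_mul
    intro p q
    rw [Real.dist_eq, Real.dist_eq, NNReal.coe_one, one_mul]
    rcases le_total p q with hpq | hpq
    · have g1 : F p ≤ F q := h1 hpq
      have g2 : p - F p ≤ q - F q := h2 hpq
      rw [abs_of_nonpos (by linarith), abs_of_nonpos (by linarith)]; linarith
    · have g1 : F q ≤ F p := h1 hpq
      have g2 : q - F q ≤ p - F p := h2 hpq
      rw [abs_of_nonneg (by linarith), abs_of_nonneg (by linarith)]; linarith
  exact this.continuous

private lemma pathCost_nonneg {h : ℝ × ℝ → ℝ} (hnn : ∀ z, 0 ≤ h z) {x y : ℝ × ℝ}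
    (hxy : x.1 + x.2 ≤ y.1 + y.2) (f : ℝ → ℝ) : 0 ≤ pathCost h x y f :=
  intervalIntegral.integral_nonneg hxy (fun u _ => hnn _)

private lemma bddBelow_cost {h : ℝ × ℝ → ℝ} (hnn : ∀ z, 0 ≤ h z) (x y : ℝ × ℝ) :
    BddBelow (pathCost h x y '' {f : ℝ → ℝ | IsPath x y f}) := by
  refine ⟨0, fun r hr => ?_⟩
  obtain ⟨f, hf, rfl⟩ := hr
  exact pathCost_nonneg hnn (add_le_add hf.1 hf.2.1) f

private lemma exists_isPath {x y : ℝ × ℝ} (h1 : x.1 ≤ y.1) (h2 : x.2 ≤ y.2) :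
    IsPath x y (fun σ => max x.1 (min (σ - x.2) y.1)) := by
  have hsub : Monotone fun σ : ℝ => σ - x.2 := fun p q hpq => by
    simpa using sub_le_sub_right hpq x.2
  have hmono : Monotone (fun σ : ℝ => max x.1 (min (σ - x.2) y.1)) :=
    monotone_const.max (hsub.min monotone_const)
  refine ⟨h1, h2, ?_, ?_, hmono.monotoneOn _, ?_⟩
  · have hxx : x.1 + x.2 - x.2 = x.1 := by ring
    simp only [hxx, min_eq_left h1, max_self]
  · have hyy : y.1 ≤ y.1 + y.2 - x.2 := by linarith
    simp only [min_eq_right hyy, max_eq_right h1]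
  · intro p _ q _ hpq
    have hδ : 0 ≤ q - p := by linarith
    have key : max x.1 (min (q - x.2) y.1) ≤ max x.1 (min (p - x.2) y.1) + (q - p) := by
      apply max_le
      · linarith [le_max_left x.1 (min (p - x.2) y.1)]
      · rcases le_total (p - x.2) y.1 with hp | hp
        · have hm : min (q - x.2) y.1 ≤ q - x.2 := min_le_left _ _
          have hm2 : p - x.2 ≤ min (p - x.2) y.1 := le_min le_rfl hp
          linarith [le_max_right x.1 (min (p - x.2) y.1)]
        · have hm : min (q - x.2) y.1 ≤ y.1 := min_le_right _ _
          have hm2 : y.1 ≤ min (p - x.2) y.1 := le_min hp le_rfl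
          linarith [le_max_right x.1 (min (p - x.2) y.1)]
    simp only
    linarith [key]

private lemma optCost_le {h : ℝ × ℝ → ℝ} (hnn : ∀ z, 0 ≤ h z) {x y : ℝ × ℝ} {f : ℝ → ℝ}
    (hf : IsPath x y f) : optCost h x y ≤ pathCost h x y f :=
  csInf_le (bddBelow_cost hnn x y) ⟨f, hf, rfl⟩

private noncomputable def clamp (x y : ℝ × ℝ) (f : ℝ → ℝ) : ℝ → ℝ :=
  fun σ => f (min (max σ (x.1 + x.2)) (y.1 + y.2))

private lemma clamp_spec {x y : ℝ × ℝ} {f : ℝ → ℝ} (hf : IsPath x y f) :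
    Monotone (clamp x y f) ∧ Monotone (fun σ => σ - clamp x y f σ) ∧
    (∀ σ, σ ≤ x.1 + x.2 → clamp x y f σ = x.1) ∧
    (∀ σ, y.1 + y.2 ≤ σ → clamp x y f σ = y.1) ∧
    (∀ σ, x.1 + x.2 ≤ σ → σ ≤ y.1 + y.2 → clamp x y f σ = f σ) := by
  obtain ⟨hx1, hx2, hfx, hfy, hmono, hco⟩ := hf
  set sx := x.1 + x.2 with hsx
  set sy := y.1 + y.2 with hsy
  have hsxy : sx ≤ sy := add_le_add hx1 hx2
  have hclmem : ∀ σ : ℝ, min (max σ sx) sy ∈ Set.Icc sx sy := fun σ =>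
    ⟨le_min (le_max_right _ _) hsxy, min_le_right _ _⟩
  have hclmono : ∀ p q : ℝ, p ≤ q → min (max p sx) sy ≤ min (max q sx) sy :=
    fun p q hpq => min_le_min (max_le_max hpq le_rfl) le_rfl
  have hcllip : ∀ p q : ℝ, p ≤ q → min (max q sx) sy ≤ min (max p sx) sy + (q - p) := by
    intro p q hpq
    rcases le_total (max p sx) sy with hc | hc
    · rw [min_eq_left hc]
      calc min (max q sx) sy ≤ max q sx := min_le_left _ _
        _ ≤ max p sx + (q - p) := by
            apply max_le
            · linarith [le_max_left p sx]
            · linarith [le_max_right p sx]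
    · rw [min_eq_right hc]
      linarith [min_le_right (max q sx) sy]
  have hcllip' : ∀ p q : ℝ, p ≤ q →
      min (max q sx) sy ≤ min (max p sx) sy + (q - p) ∨ True := fun _ _ _ => Or.inr trivial
  constructor
  · intro p q hpq
    exact hmono (hclmem p) (hclmem q) (hclmono p q hpq)
  constructor
  · intro p q hpq
    simp only [clamp]
    have h3 := hco (hclmem p) (hclmem q) (hclmono p q hpq)
    simp only at h3
    have h4 := hcllip p q hpq
    linarith
  refine ⟨?_, ?_, ?_⟩
  · intro σ hσ
    simp only [clamp, ← hsx, ← hsy]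
    rw [max_eq_right hσ, min_eq_left hsxy, hfx]
  · intro σ hσ
    simp only [clamp, ← hsx, ← hsy]
    rw [max_eq_left (hsxy.trans hσ), min_eq_right hσ, hfy]
  · intro σ hσ1 hσ2
    simp only [clamp, ← hsx, ← hsy]
    rw [max_eq_left hσ1, min_eq_left hσ2]

private lemma clamp_cost (h : ℝ × ℝ → ℝ) {x y : ℝ × ℝ} {f : ℝ → ℝ} (hf : IsPath x y f) :
    pathCost h x y (clamp x y f) = pathCost h x y f := by
  have hsxy : x.1 + x.2 ≤ y.1 + y.2 := add_le_add hf.1 hf.2.1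
  have heq := (clamp_spec hf).2.2.2.2
  apply intervalIntegral.integral_congr
  intro σ hσ
  rw [Set.uIcc_of_le hsxy] at hσ
  simp only [heq σ hσ.1 hσ.2]

private lemma quad (h : ℝ × ℝ → ℝ) (hcont : Continuous h) (hnn : ∀ z, 0 ≤ h z)
    (c d y y' : ℝ × ℝ)
    (hdy1 : d.1 ≤ y.1) (hdy2 : d.2 ≤ y.2)
    (hcy1 : c.1 ≤ y.1) (hcy2 : c.2 ≤ y.2)
    (hcy'1 : c.1 ≤ y'.1) (hcy'2 : c.2 ≤ y'.2)
    (hdy'1 : d.1 ≤ y'.1) (hdy'2 : d.2 ≤ y'.2)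
    (hyy1 : y.1 ≤ y'.1) (hyy2 : y.2 = y'.2)
    (hdc1 : d.1 ≤ c.1) (hcd2 : c.2 ≤ d.2) :
    optCost h d y + optCost h c y' ≤ optCost h c y + optCost h d y' := by
  set sc := c.1 + c.2 with hsc
  set sd := d.1 + d.2 with hsd
  set sy := y.1 + y.2 with hsy
  set sy' := y'.1 + y'.2 with hsy'
  have hscy : sc ≤ sy := add_le_add hcy1 hcy2
  have hsdy : sd ≤ sy := add_le_add hdy1 hdy2
  have hsyy : sy ≤ sy' := by rw [hsy, hsy', hyy2]; linarith
  set M := max sc sd with hM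
  have hMy : M ≤ sy := max_le hscy hsdy
  have key : ∀ f g : ℝ → ℝ, IsPath c y f → IsPath d y' g →
      optCost h d y + optCost h c y' ≤ pathCost h c y f + pathCost h d y' g := by
    intro f g hf hg
    obtain ⟨Fmono, Fco, Flo, Fhi, -⟩ := clamp_spec hf
    obtain ⟨Gmono, Gco, Glo, Ghi, -⟩ := clamp_spec hg
    set F := clamp c y f with hF
    set G := clamp d y' g with hG
    -- global bounds
    have Fge : ∀ σ : ℝ, c.1 ≤ F σ := by
      intro σ
      rcases le_total σ sc with hσ | hσ
      · rw [Flo σ hσ]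
      · rw [← Flo sc le_rfl]; exact Fmono hσ
    have Fle : ∀ σ : ℝ, F σ ≤ y.1 := by
      intro σ
      rcases le_total σ sy with hσ | hσ
      · rw [← Fhi sy le_rfl]; exact Fmono hσ
      · rw [Fhi σ hσ]
    have GsyM : y.1 ≤ G sy := by
      have hco := Gco hsyy
      simp only at hco
      rw [Ghi sy' le_rfl] at hco
      have : sy' - y'.1 = y'.2 := by rw [hsy']; ring
      rw [this] at hco
      have : sy = y.1 + y'.2 := by rw [hsy, hyy2]
      linarith
    have GM : ∀ σ : ℝ, σ ≤ M → G σ ≤ c.1 := by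
      intro σ hσ
      have h1 : G σ ≤ G M := Gmono hσ
      rcases le_total sd sc with hdc | hdc
      · have hMsc : M = sc := max_eq_left hdc
        have hco := Gco hdc
        simp only at hco
        rw [Glo sd le_rfl] at hco
        have hsd1 : sd - d.1 = d.2 := by rw [hsd]; ring
        rw [hsd1] at hco
        rw [hMsc] at h1
        have : sc = c.1 + c.2 := hsc
        linarith
      · have hMsd : M = sd := max_eq_right hdc
        rw [hMsd, Glo sd le_rfl] at h1
        linarith
    have FgeG_low : ∀ σ : ℝ, σ ≤ M → G σ ≤ F σ := fun σ hσ => (GM σ hσ).trans (Fge σ)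
    have FleG_high : ∀ σ : ℝ, sy ≤ σ → F σ ≤ G σ := by
      intro σ hσ
      rw [Fhi σ hσ]
      exact GsyM.trans (Gmono hσ)
    set P := fun σ => min (F σ) (G σ) with hP
    set Q := fun σ => max (F σ) (G σ) with hQ
    have hPd : P sd = d.1 := by
      rw [hP]
      simp only
      rw [Glo sd le_rfl]
      exact min_eq_right ((hdc1.trans (Fge sd)))
    have hPy : P sy = y.1 := by
      rw [hP]; simp only
      rw [Fhi sy le_rfl]
      exact min_eq_left GsyM
    have hQc : Q sc = c.1 := by
      rw [hQ]; simp only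
      rw [Flo sc le_rfl]
      exact max_eq_left (GM sc (le_max_left _ _))
    have hQy' : Q sy' = y'.1 := by
      rw [hQ]; simp only
      rw [Ghi sy' le_rfl, Fhi sy' hsyy]
      exact max_eq_right (hyy1)
    have Pmono : Monotone P := Fmono.min Gmono
    have Qmono : Monotone Q := Fmono.max Gmono
    have Pco : Monotone (fun σ => σ - P σ) := by
      intro p q hpq
      have h1 := Fco hpq; have h2 := Gco hpq
      simp only at h1 h2 ⊢
      rw [hP]; simp only
      rcases le_total (F q) (G q) with h4 | h4
      · rw [min_eq_left h4]
        rcases le_total (F p) (G p) with h3 | h3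
        · rw [min_eq_left h3]; linarith
        · rw [min_eq_right h3]; linarith
      · rw [min_eq_right h4]
        rcases le_total (F p) (G p) with h3 | h3
        · rw [min_eq_left h3]; linarith
        · rw [min_eq_right h3]; linarith
    have Qco : Monotone (fun σ => σ - Q σ) := by
      intro p q hpq
      have h1 := Fco hpq; have h2 := Gco hpq
      simp only at h1 h2 ⊢
      rw [hQ]; simp only
      rcases le_total (F q) (G q) with h4 | h4
      · rw [max_eq_right h4]
        rcases le_total (F p) (G p) with h3 | h3
        · rw [max_eq_right h3]; linarith
        · rw [max_eq_left h3]; linarith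
      · rw [max_eq_left h4]
        rcases le_total (F p) (G p) with h3 | h3
        · rw [max_eq_right h3]; linarith
        · rw [max_eq_left h3]; linarith
    have hPpath : IsPath d y P :=
      ⟨hdy1, hdy2, hPd, hPy, Pmono.monotoneOn _, Pco.monotoneOn _⟩
    have hQpath : IsPath c y' Q :=
      ⟨hcy'1, hcy'2, hQc, hQy', Qmono.monotoneOn _, Qco.monotoneOn _⟩
    -- integrands
    set φF := fun σ => h (F σ, σ - F σ) with hφF
    set φG := fun σ => h (G σ, σ - G σ) with hφG
    set φP := fun σ => h (P σ, σ - P σ) with hφP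
    set φQ := fun σ => h (Q σ, σ - Q σ) with hφQ
    have contF : Continuous F := monotone_continuous Fmono Fco
    have contG : Continuous G := monotone_continuous Gmono Gco
    have contP : Continuous P := contF.min contG
    have contQ : Continuous Q := contF.max contG
    have cφF : Continuous φF := hcont.comp (contF.prodMk (continuous_id.sub contF))
    have cφG : Continuous φG := hcont.comp (contG.prodMk (continuous_id.sub contG))
    have cφP : Continuous φP := hcont.comp (contP.prodMk (continuous_id.sub contP))
    have cφQ : Continuous φQ := hcont.comp (contQ.prodMk (continuous_id.sub contQ))
    have iF : ∀ p q : ℝ, IntervalIntegrable φF MeasureTheory.volume p q :=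
      fun p q => cφF.intervalIntegrable p q
    have iG : ∀ p q : ℝ, IntervalIntegrable φG MeasureTheory.volume p q :=
      fun p q => cφG.intervalIntegrable p q
    have iP : ∀ p q : ℝ, IntervalIntegrable φP MeasureTheory.volume p q :=
      fun p q => cφP.intervalIntegrable p q
    have iQ : ∀ p q : ℝ, IntervalIntegrable φQ MeasureTheory.volume p q :=
      fun p q => cφQ.intervalIntegrable p q
    -- pointwise identities
    have eq_mid : ∀ σ : ℝ, φP σ + φQ σ = φF σ + φG σ := by
      intro σ
      rw [hφP, hφQ, hφF, hφG, hP, hQ]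
      simp only
      rcases le_total (F σ) (G σ) with h4 | h4
      · rw [min_eq_left h4, max_eq_right h4]
      · rw [min_eq_right h4, max_eq_left h4, add_comm]
    have eq_lowP : ∀ σ ∈ Set.uIcc sd M, φP σ = φG σ := by
      intro σ hσ
      rw [Set.uIcc_of_le (le_max_right sc sd)] at hσ
      rw [hφP, hφG, hP]
      simp only
      rw [min_eq_right (FgeG_low σ hσ.2)]
    have eq_lowQ : ∀ σ ∈ Set.uIcc sc M, φQ σ = φF σ := by
      intro σ hσ
      rw [Set.uIcc_of_le (le_max_left sc sd)] at hσ
      rw [hφQ, hφF, hQ]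
      simp only
      rw [max_eq_left (FgeG_low σ hσ.2)]
    have eq_highQ : ∀ σ ∈ Set.uIcc sy sy', φQ σ = φG σ := by
      intro σ hσ
      rw [Set.uIcc_of_le hsyy] at hσ
      rw [hφQ, hφG, hQ]
      simp only
      rw [max_eq_right (FleG_high σ hσ.1)]
    -- integral splits
    have s1 : (∫ σ in sd..M, φP σ) + (∫ σ in M..sy, φP σ) = ∫ σ in sd..sy, φP σ :=
      intervalIntegral.integral_add_adjacent_intervals (iP _ _) (iP _ _)
    have s2a : (∫ σ in sc..M, φQ σ) + (∫ σ in M..sy, φQ σ) = ∫ σ in sc..sy, φQ σ :=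
      intervalIntegral.integral_add_adjacent_intervals (iQ _ _) (iQ _ _)
    have s2b : (∫ σ in sc..sy, φQ σ) + (∫ σ in sy..sy', φQ σ) = ∫ σ in sc..sy', φQ σ :=
      intervalIntegral.integral_add_adjacent_intervals (iQ _ _) (iQ _ _)
    have s3 : (∫ σ in sc..M, φF σ) + (∫ σ in M..sy, φF σ) = ∫ σ in sc..sy, φF σ :=
      intervalIntegral.integral_add_adjacent_intervals (iF _ _) (iF _ _)
    have s4a : (∫ σ in sd..M, φG σ) + (∫ σ in M..sy, φG σ) = ∫ σ in sd..sy, φG σ :=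
      intervalIntegral.integral_add_adjacent_intervals (iG _ _) (iG _ _)
    have s4b : (∫ σ in sd..sy, φG σ) + (∫ σ in sy..sy', φG σ) = ∫ σ in sd..sy', φG σ :=
      intervalIntegral.integral_add_adjacent_intervals (iG _ _) (iG _ _)
    have c1 : (∫ σ in sd..M, φP σ) = ∫ σ in sd..M, φG σ :=
      intervalIntegral.integral_congr eq_lowP
    have c2 : (∫ σ in sc..M, φQ σ) = ∫ σ in sc..M, φF σ :=
      intervalIntegral.integral_congr eq_lowQ
    have c3 : (∫ σ in sy..sy', φQ σ) = ∫ σ in sy..sy', φG σ :=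
      intervalIntegral.integral_congr eq_highQ
    have c4 : (∫ σ in M..sy, φP σ) + (∫ σ in M..sy, φQ σ)
        = (∫ σ in M..sy, φF σ) + (∫ σ in M..sy, φG σ) := by
      rw [← intervalIntegral.integral_add (iP M sy) (iQ M sy),
          ← intervalIntegral.integral_add (iF M sy) (iG M sy)]
      exact intervalIntegral.integral_congr (fun σ _ => eq_mid σ)
    -- costs
    have ePF : pathCost h d y P = ∫ σ in sd..sy, φP σ := rfl
    have eQF : pathCost h c y' Q = ∫ σ in sc..sy', φQ σ := rfl
    have eFF : pathCost h c y F = ∫ σ in sc..sy, φF σ := rfl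
    have eGF : pathCost h d y' G = ∫ σ in sd..sy', φG σ := rfl
    have costid : pathCost h d y P + pathCost h c y' Q
        = pathCost h c y F + pathCost h d y' G := by
      rw [ePF, eQF, eFF, eGF]
      linarith [s1, s2a, s2b, s3, s4a, s4b, c1, c2, c3, c4]
    have o1 : optCost h d y ≤ pathCost h d y P := optCost_le hnn hPpath
    have o2 : optCost h c y' ≤ pathCost h c y' Q := optCost_le hnn hQpath
    have cf : pathCost h c y F = pathCost h c y f := clamp_cost h hf
    have cg : pathCost h d y' G = pathCost h d y' g := clamp_cost h hg
    linarith
  -- conclude via infima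
  have m1 : (fun σ => max c.1 (min (σ - c.2) y.1)) ∈ {f : ℝ → ℝ | IsPath c y f} :=
    exists_isPath hcy1 hcy2
  have m2 : (fun σ => max d.1 (min (σ - d.2) y'.1)) ∈ {f : ℝ → ℝ | IsPath d y' f} :=
    exists_isPath hdy'1 hdy'2
  have ne1 : (pathCost h c y '' {f : ℝ → ℝ | IsPath c y f}).Nonempty := ⟨_, Set.mem_image_of_mem _ m1⟩
  have ne2 : (pathCost h d y' '' {f : ℝ → ℝ | IsPath d y' f}).Nonempty := ⟨_, Set.mem_image_of_mem _ m2⟩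
  have step2 : ∀ r2 ∈ pathCost h d y' '' {f : ℝ → ℝ | IsPath d y' f},
      optCost h d y + optCost h c y' - optCost h c y ≤ r2 := by
    rintro r2 ⟨g, hg, rfl⟩
    have step1 : ∀ r1 ∈ pathCost h c y '' {f : ℝ → ℝ | IsPath c y f},
        optCost h d y + optCost h c y' - pathCost h d y' g ≤ r1 := by
      rintro r1 ⟨f, hf, rfl⟩
      have := key f g hf hg
      linarith
    have := le_csInf ne1 step1
    have hopt : optCost h c y = sInf (pathCost h c y '' {f : ℝ → ℝ | IsPath c y f}) := rfl
    linarith [hopt ▸ this]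
  have := le_csInf ne2 step2
  have hopt : optCost h d y' = sInf (pathCost h d y' '' {f : ℝ → ℝ | IsPath d y' f}) := rfl
  linarith [hopt ▸ this]

private lemma isPath_swap {x y : ℝ × ℝ} {f : ℝ → ℝ} (hf : IsPath x y f) :
    IsPath (x.2, x.1) (y.2, y.1) (fun σ => σ - f σ) := by
  obtain ⟨h1, h2, h3, h4, h5, h6⟩ := hf
  refine ⟨h2, h1, ?_, ?_, ?_, ?_⟩
  · show x.2 + x.1 - f (x.2 + x.1) = x.2
    rw [add_comm x.2 x.1, h3]; ring
  · show y.2 + y.1 - f (y.2 + y.1) = y.2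
    rw [add_comm y.2 y.1, h4]; ring
  · show MonotoneOn _ (Set.Icc (x.2 + x.1) (y.2 + y.1))
    rw [add_comm x.2 x.1, add_comm y.2 y.1]
    exact h6
  · show MonotoneOn (fun σ => σ - (σ - f σ)) (Set.Icc (x.2 + x.1) (y.2 + y.1))
    have hfe : (fun σ : ℝ => σ - (σ - f σ)) = f := funext fun σ => by ring
    rw [hfe, add_comm x.2 x.1, add_comm y.2 y.1]
    exact h5

private lemma pathCost_swap (h : ℝ × ℝ → ℝ) (x y : ℝ × ℝ) (f : ℝ → ℝ) :
    pathCost (fun z => h (z.2, z.1)) (x.2, x.1) (y.2, y.1) (fun σ => σ - f σ)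
      = pathCost h x y f := by
  show (∫ σ in (x.2 + x.1)..(y.2 + y.1), h (σ - (σ - f σ), σ - f σ))
      = ∫ σ in (x.1 + x.2)..(y.1 + y.2), h (f σ, σ - f σ)
  rw [add_comm x.2 x.1, add_comm y.2 y.1]
  congr 1
  funext σ
  rw [sub_sub_cancel]

private lemma optCost_swap (h : ℝ × ℝ → ℝ) (x y : ℝ × ℝ) :
    optCost h x y = optCost (fun z => h (z.2, z.1)) (x.2, x.1) (y.2, y.1) := by
  simp only [optCost]
  congr 1
  ext r
  constructor
  · rintro ⟨f, hf, rfl⟩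
    exact ⟨fun σ => σ - f σ, isPath_swap hf, pathCost_swap h x y f⟩
  · rintro ⟨g, hg, rfl⟩
    refine ⟨fun σ => σ - g σ, ?_, ?_⟩
    · have := isPath_swap (x := (x.2, x.1)) (y := (y.2, y.1)) hg
      simpa using this
    · have := pathCost_swap (fun z => h (z.2, z.1)) (x.2, x.1) (y.2, y.1) g
      simpa using this

private lemma quad' (h : ℝ × ℝ → ℝ) (hcont : Continuous h) (hnn : ∀ z, 0 ≤ h z)
    (c d y y' : ℝ × ℝ)
    (hdy1 : d.1 ≤ y.1) (hdy2 : d.2 ≤ y.2)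
    (hcy1 : c.1 ≤ y.1) (hcy2 : c.2 ≤ y.2)
    (hcy'1 : c.1 ≤ y'.1) (hcy'2 : c.2 ≤ y'.2)
    (hdy'1 : d.1 ≤ y'.1) (hdy'2 : d.2 ≤ y'.2)
    (hyy2 : y.2 ≤ y'.2) (hyy1 : y.1 = y'.1)
    (hdc2 : d.2 ≤ c.2) (hcd1 : c.1 ≤ d.1) :
    optCost h d y + optCost h c y' ≤ optCost h c y + optCost h d y' := by
  have H := quad (fun z => h (z.2, z.1)) (hcont.comp (continuous_snd.prodMk continuous_fst))
    (fun z => hnn _) (c.2, c.1) (d.2, d.1) (y.2, y.1) (y'.2, y'.1)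
    hdy2 hdy1 hcy2 hcy1 hcy'2 hcy'1 hdy'2 hdy'1 hyy2 hyy1 hdc2 hcd1
  rw [← optCost_swap h d y, ← optCost_swap h c y', ← optCost_swap h c y,
      ← optCost_swap h d y'] at H
  exact H

/-- **propagation order.** Let `h : ℝ² → [0,∞)` be continuous, let `B`
be a top border `B(t) = (t, b)` with direction `d_B = (1,0)` or a right border
`B(t) = (b, t)` with direction `d_B = (0,1)`, and let `A(s) = a + s·e` with
`a ∈ [0,∞)²` and `e ∈ {(1,0),(0,1)}`. Writing
`[σ ▷ τ] = opt_h((0,0), A(σ)) + opt_h(A(σ), B(τ))`, if `t < t′`, the points `A(s)`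
and `A(s′)` lie componentwise between `(0,0)` and `B(t)`, `[s ▷ t] < [s′ ▷ t]` and
`[s ▷ t′] ≥ [s′ ▷ t′]`, then `s < s′` iff `e = d_B`. -/
theorem propagation_order
    (h : ℝ × ℝ → ℝ) (hcont : Continuous h) (hnonneg : ∀ z : ℝ × ℝ, 0 ≤ h z)
    (b : ℝ) (hb : 0 ≤ b)
    (B : ℝ → ℝ × ℝ) (dB : ℝ × ℝ)
    (hB : (dB = ((1 : ℝ), (0 : ℝ)) ∧ ∀ t : ℝ, B t = (t, b)) ∨
          (dB = ((0 : ℝ), (1 : ℝ)) ∧ ∀ t : ℝ, B t = (b, t)))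
    (a : ℝ × ℝ) (ha1 : 0 ≤ a.1) (ha2 : 0 ≤ a.2)
    (e : ℝ × ℝ) (he : e = ((1 : ℝ), (0 : ℝ)) ∨ e = ((0 : ℝ), (1 : ℝ)))
    (A : ℝ → ℝ × ℝ) (hA : ∀ s : ℝ, A s = a + s • e)
    (t t' s s' : ℝ) (htt' : t < t')
    (hs : 0 ≤ (A s).1 ∧ 0 ≤ (A s).2 ∧ (A s).1 ≤ (B t).1 ∧ (A s).2 ≤ (B t).2)
    (hs' : 0 ≤ (A s').1 ∧ 0 ≤ (A s').2 ∧ (A s').1 ≤ (B t).1 ∧ (A s').2 ≤ (B t).2)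
    (h1 : optCost h ((0 : ℝ), (0 : ℝ)) (A s) + optCost h (A s) (B t)
        < optCost h ((0 : ℝ), (0 : ℝ)) (A s') + optCost h (A s') (B t))
    (h2 : optCost h ((0 : ℝ), (0 : ℝ)) (A s) + optCost h (A s) (B t')
        ≥ optCost h ((0 : ℝ), (0 : ℝ)) (A s') + optCost h (A s') (B t')) :
    s < s' ↔ e = dB := by
  rcases hB with ⟨hdB, hBdef⟩ | ⟨hdB, hBdef⟩
  · -- top border: B t = (t, b), dB = (1,0)
    have hBt1 : (B t).1 = t := by rw [hBdef t]
    have hBt2 : (B t).2 = b := by rw [hBdef t]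
    have hB't1 : (B t').1 = t' := by rw [hBdef t']
    have hB't2 : (B t').2 = b := by rw [hBdef t']
    rcases he with he | he
    · -- e = (1,0) = dB : aligned, show s < s'
      have hA1 : ∀ σ : ℝ, (A σ).1 = a.1 + σ := fun σ => by rw [hA σ, he]; simp
      have hA2 : ∀ σ : ℝ, (A σ).2 = a.2 := fun σ => by rw [hA σ, he]; simp
      have hedB : e = dB := by rw [he, hdB]
      have hmain : s < s' := by
        by_contra hss
        push_neg at hss
        rcases lt_or_eq_of_le hss with hlt | heq
        · have H := quad h hcont hnonneg (A s) (A s') (B t) (B t')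
            hs'.2.2.1 hs'.2.2.2 hs.2.2.1 hs.2.2.2
            (by rw [hB't1]; have := hs.2.2.1; rw [hBt1] at this; linarith)
            (by rw [hB't2]; have := hs.2.2.2; rw [hBt2] at this; linarith)
            (by rw [hB't1]; have := hs'.2.2.1; rw [hBt1] at this; linarith)
            (by rw [hB't2]; have := hs'.2.2.2; rw [hBt2] at this; linarith)
            (by rw [hBt1, hB't1]; linarith)
            (by rw [hBt2, hB't2])
            (by rw [hA1, hA1]; linarith)
            (by rw [hA2, hA2])
          linarith
        · rw [heq] at h1
          exact lt_irrefl _ h1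
      exact ⟨fun _ => hedB, fun _ => hmain⟩
    · -- e = (0,1) ≠ dB = (1,0): anti, show ¬ (s < s')
      have hA1 : ∀ σ : ℝ, (A σ).1 = a.1 := fun σ => by rw [hA σ, he]; simp
      have hA2 : ∀ σ : ℝ, (A σ).2 = a.2 + σ := fun σ => by rw [hA σ, he]; simp
      have hne : e ≠ dB := by rw [he, hdB]; simp [Prod.ext_iff]
      have hmain : ¬ (s < s') := by
        intro hlt
        have H := quad h hcont hnonneg (A s) (A s') (B t) (B t')
          hs'.2.2.1 hs'.2.2.2 hs.2.2.1 hs.2.2.2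
          (by rw [hB't1]; have := hs.2.2.1; rw [hBt1] at this; linarith)
          (by rw [hB't2]; have := hs.2.2.2; rw [hBt2] at this; linarith)
          (by rw [hB't1]; have := hs'.2.2.1; rw [hBt1] at this; linarith)
          (by rw [hB't2]; have := hs'.2.2.2; rw [hBt2] at this; linarith)
          (by rw [hBt1, hB't1]; linarith)
          (by rw [hBt2, hB't2])
          (by rw [hA1, hA1])
          (by rw [hA2, hA2]; linarith)
        linarith
      exact ⟨fun hlt => absurd hlt hmain, fun hedb => absurd hedb hne⟩
  · -- right border: B t = (b, t), dB = (0,1)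
    have hBt1 : (B t).1 = b := by rw [hBdef t]
    have hBt2 : (B t).2 = t := by rw [hBdef t]
    have hB't1 : (B t').1 = b := by rw [hBdef t']
    have hB't2 : (B t').2 = t' := by rw [hBdef t']
    rcases he with he | he
    · -- e = (1,0) ≠ dB = (0,1): anti, show ¬ (s < s')
      have hA1 : ∀ σ : ℝ, (A σ).1 = a.1 + σ := fun σ => by rw [hA σ, he]; simp
      have hA2 : ∀ σ : ℝ, (A σ).2 = a.2 := fun σ => by rw [hA σ, he]; simp
      have hne : e ≠ dB := by rw [he, hdB]; simp [Prod.ext_iff]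
      have hmain : ¬ (s < s') := by
        intro hlt
        have H := quad' h hcont hnonneg (A s) (A s') (B t) (B t')
          hs'.2.2.1 hs'.2.2.2 hs.2.2.1 hs.2.2.2
          (by rw [hB't1]; have := hs.2.2.1; rw [hBt1] at this; linarith)
          (by rw [hB't2]; have := hs.2.2.2; rw [hBt2] at this; linarith)
          (by rw [hB't1]; have := hs'.2.2.1; rw [hBt1] at this; linarith)
          (by rw [hB't2]; have := hs'.2.2.2; rw [hBt2] at this; linarith)
          (by rw [hBt2, hB't2]; linarith)
          (by rw [hBt1, hB't1])
          (by rw [hA2, hA2])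
          (by rw [hA1, hA1]; linarith)
        linarith
      exact ⟨fun hlt => absurd hlt hmain, fun hedb => absurd hedb hne⟩
    · -- e = (0,1) = dB : aligned, show s < s'
      have hA1 : ∀ σ : ℝ, (A σ).1 = a.1 := fun σ => by rw [hA σ, he]; simp
      have hA2 : ∀ σ : ℝ, (A σ).2 = a.2 + σ := fun σ => by rw [hA σ, he]; simp
      have hedB : e = dB := by rw [he, hdB]
      have hmain : s < s' := by
        by_contra hss
        push_neg at hss
        rcases lt_or_eq_of_le hss with hlt | heq
        · have H := quad' h hcont hnonneg (A s) (A s') (B t) (B t')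
            hs'.2.2.1 hs'.2.2.2 hs.2.2.1 hs.2.2.2
            (by rw [hB't1]; have := hs.2.2.1; rw [hBt1] at this; linarith)
            (by rw [hB't2]; have := hs.2.2.2; rw [hBt2] at this; linarith)
            (by rw [hB't1]; have := hs'.2.2.1; rw [hBt1] at this; linarith)
            (by rw [hB't2]; have := hs'.2.2.2; rw [hBt2] at this; linarith)
            (by rw [hBt2, hB't2]; linarith)
            (by rw [hBt1, hB't1])
            (by rw [hA2, hA2]; linarith)
            (by rw [hA1, hA1])
          linarith
        · rw [heq] at h1
          exact lt_irrefl _ h1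
      exact ⟨fun _ => hedB, fun _ => hmain⟩
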